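/- Let f be an approximately concave function and let k ≥ 2 be a cache size such that k+1 lies in the range of f. Then there exists a constant c, depending only on f and k, such that for every page request sequence σ of length T conforming to f, the number of faults of the FIFO policy with cache size k (starting from an empty cache) on σ is at most (k/(f⁻¹(k+1) − 1))·T + c; in particular, FIFO's fault rate on σ is at most k/(f⁻¹(k+1) − 1) plus an additive term that tends to 0 as T → ∞. -/
import Mathlib


/-- A page request sequence `σ` conforms to `f` if every window of `n` consecutive
requests contains requests for at most `f n` distinct pages. -/
def Conforms (f : ℕ → ℕ) (σ : List ℕ) : Prop :=
  ∀ w : List ℕ, w <:+: σ → w.toFinset.card ≤ f w.length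

/-- `f` is approximately concave: `f 1 = 1`, `f 2 = 2`, `f (n+1) ∈ {f n, f n + 1}`
for all `n ≥ 1`, and `m_y = |{n ≥ 1 : f n = y}|` is nondecreasing over attained values. -/
def ApproxConcave (f : ℕ → ℕ) : Prop :=
  f 1 = 1 ∧ f 2 = 2 ∧
    (∀ n, 1 ≤ n → f (n + 1) = f n ∨ f (n + 1) = f n + 1) ∧
    (∀ y z, (∃ n, 1 ≤ n ∧ f n = y) → (∃ n, 1 ≤ n ∧ f n = z) → y ≤ z →
      {n | 1 ≤ n ∧ f n = y}.encard ≤ {n | 1 ≤ n ∧ f n = z}.encard)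

/-- `fInv f y` is the smallest `x ≥ 1` with `f x = y`. -/
noncomputable def fInv (f : ℕ → ℕ) (y : ℕ) : ℕ := sInf {x | 1 ≤ x ∧ f x = y}

/-- One step of the FIFO policy with cache size `k`.  The cache is maintained as a queue
of (distinct) pages ordered by entry time (most recent entry first); a request for a
cached page leaves the queue unchanged, and on a fault the requested page enters at the
front, evicting the page that entered earliest (the last entry) if the cache overflows. -/
def fifoStep (k : ℕ) (Q : List ℕ) (p : ℕ) : List ℕ :=
  if p ∈ Q then Q else (p :: Q).take k

/-- The number of faults of the FIFO policy with cache size `k` on a request sequence,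
starting from the cache `Q`.  A request is a fault when the page is not in the cache. -/
def fifoFaults (k : ℕ) : List ℕ → List ℕ → ℕ
  | _, [] => 0
  | Q, p :: rest => (if p ∈ Q then 0 else 1) + fifoFaults k (fifoStep k Q p) rest

lemma fifoFaults_append (k : ℕ) (a b : List ℕ) : ∀ Q,
    fifoFaults k Q (a ++ b) = fifoFaults k Q a + fifoFaults k (a.foldl (fifoStep k) Q) b := by
  induction a with
  | nil => simp [fifoFaults]
  | cons p rest ih => intro Q; simp [fifoFaults, ih, Nat.add_assoc]

lemma fifo_conservative_aux (k : ℕ) : ∀ (w Q : List ℕ) (F : Finset ℕ),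
    (Q.take F.card).toFinset = F → (F ∪ w.toFinset).card ≤ k →
    fifoFaults k Q w + F.card ≤ (F ∪ w.toFinset).card := by
  intro w
  induction w with
  | nil => intro Q F hF hc; simp [fifoFaults]
  | cons p rest ih =>
    intro Q F hF hc
    have hsub : F ∪ rest.toFinset ⊆ F ∪ (p :: rest).toFinset := by
      simp only [List.toFinset_cons]
      exact Finset.union_subset_union_right (Finset.subset_insert _ _)
    by_cases hp : p ∈ Q
    · have h1 := ih Q F hF (le_trans (Finset.card_le_card hsub) hc)
      have : fifoFaults k Q (p :: rest) = fifoFaults k (fifoStep k Q p) rest := by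
        simp [fifoFaults, hp]
      rw [this, fifoStep, if_pos hp]
      exact le_trans (by omega) (le_trans h1 (Finset.card_le_card hsub))
    · have hpF : p ∉ F := by
        intro h
        rw [← hF] at h
        exact hp (List.take_subset _ _ (List.mem_toFinset.mp h))
      have hunion : insert p F ∪ rest.toFinset = F ∪ (p :: rest).toFinset := by
        simp only [List.toFinset_cons, Finset.insert_union, Finset.union_insert]
      have hcardF : (insert p F).card = F.card + 1 := Finset.card_insert_of_notMem hpF
      have hck : F.card + 1 ≤ k := by
        have h1 : insert p F ⊆ F ∪ (p :: rest).toFinset := by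
          rw [← hunion]; exact Finset.subset_union_left
        have := Finset.card_le_card h1
        omega
      have hQ' : (((p :: Q).take k).take (insert p F).card).toFinset = insert p F := by
        rw [hcardF, List.take_take, min_eq_left hck]
        simp [List.take_cons, hF]
      have hc' : (insert p F ∪ rest.toFinset).card ≤ k := by
        rw [hunion]; exact hc
      have h1 := ih ((p :: Q).take k) (insert p F) hQ' hc'
      have heq : fifoFaults k Q (p :: rest) = 1 + fifoFaults k ((p :: Q).take k) rest := by
        simp [fifoFaults, fifoStep, hp]
      rw [heq]
      rw [hunion] at h1
      omega

lemma fifo_conservative (k : ℕ) (w Q : List ℕ) (h : w.toFinset.card ≤ k) :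
    fifoFaults k Q w ≤ k := by
  have := fifo_conservative_aux k w Q ∅ (by simp) (by simpa using h)
  simp at this
  omega

lemma chunk_bound (k L : ℕ) (hL : 1 ≤ L) :
    ∀ n (σ : List ℕ), σ.length = n →
      (∀ w, w <:+: σ → w.length ≤ L → w.toFinset.card ≤ k) →
      ∀ Q, fifoFaults k Q σ ≤ k * ((σ.length + L - 1) / L) := by
  intro n
  induction n using Nat.strong_induction_on with
  | _ n ih =>
    intro σ hlen H Q
    rcases σ with _ | ⟨p, rest⟩
    · simp [fifoFaults]
    · set σ := p :: rest with hσ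
      have hpos : 1 ≤ σ.length := by simp [hσ]
      have hsplit : σ = σ.take L ++ σ.drop L := (List.take_append_drop L σ).symm
      have hfa : fifoFaults k Q σ
          = fifoFaults k Q (σ.take L) + fifoFaults k ((σ.take L).foldl (fifoStep k) Q) (σ.drop L) := by
        conv_lhs => rw [hsplit]
        exact fifoFaults_append k _ _ Q
      have h1 : fifoFaults k Q (σ.take L) ≤ k := by
        apply fifo_conservative
        apply H
        · exact (List.take_prefix _ _).isInfix
        · simpa using Nat.min_le_left L σ.length
      have hdlen : (σ.drop L).length = σ.length - L := by simp
      have h2 : fifoFaults k ((σ.take L).foldl (fifoStep k) Q) (σ.drop L)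
          ≤ k * (((σ.drop L).length + L - 1) / L) := by
        apply ih (σ.length - L) _ _ hdlen
        · intro w hw hwl
          exact H w (hw.trans (List.drop_suffix _ _).isInfix) hwl
        · omega
      rw [hfa, hdlen] at *
      have key : k + k * ((σ.length - L + L - 1) / L) ≤ k * ((σ.length + L - 1) / L) := by
        rcases le_or_gt L σ.length with hge | hlt
        · have e1 : σ.length - L + L - 1 = σ.length - 1 := by omega
          have e2 : σ.length + L - 1 = (σ.length - 1) + L := by omega
          rw [e1, e2, Nat.add_div_right _ (by omega), Nat.mul_add, Nat.mul_one]
          omega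
        · have e1 : σ.length - L + L - 1 = L - 1 := by omega
          rw [e1, Nat.div_eq_of_lt (by omega), Nat.mul_zero]
          have : 1 ≤ (σ.length + L - 1) / L := (Nat.one_le_div_iff (by omega)).mpr (by omega)
          calc k + 0 = k * 1 := by omega
            _ ≤ _ := Nat.mul_le_mul_left k this
      omega

lemma f_mono (f : ℕ → ℕ) (hstep : ∀ n, 1 ≤ n → f (n + 1) = f n ∨ f (n + 1) = f n + 1) :
    ∀ a b, 1 ≤ a → a ≤ b → f a ≤ f b := by
  intro a b ha hab
  induction b, hab using Nat.le_induction with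
  | base => exact le_refl _
  | succ b hb ih =>
    rcases hstep b (le_trans ha hb) with h | h <;> omega

/-- **Exercise 1.5**: for every approximately concave `f` and cache size `k ≥ 2` with
`k+1` in the range of `f`, there is a constant `c` (depending only on `f` and `k`) such
that on every request sequence of length `T` conforming to `f`, FIFO (from an empty
cache) incurs at most `(k / (f⁻¹(k+1) - 1))·T + c` faults; hence its fault rate is at
most `k / (f⁻¹(k+1) - 1)` plus an additive term that vanishes as `T → ∞`. -/
theorem stmt12 (f : ℕ → ℕ) (hf : ApproxConcave f) (k : ℕ) (hk : 2 ≤ k)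
    (hrange : ∃ n, 1 ≤ n ∧ f n = k + 1) :
    ∃ c : ℝ, ∀ σ : List ℕ, Conforms f σ →
      (fifoFaults k [] σ : ℝ) ≤
        (k : ℝ) / ((fInv f (k + 1) : ℝ) - 1) * (σ.length : ℝ) + c := by
  obtain ⟨hf1, hf2, hstep, hconc⟩ := hf
  set m := fInv f (k + 1) with hm
  have hmem : m ∈ {x | 1 ≤ x ∧ f x = k + 1} := Nat.sInf_mem (by exact hrange)
  obtain ⟨hm1, hmval⟩ := hmem
  have hm2 : 2 ≤ m := by
    rcases Nat.lt_or_ge m 2 with h | h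
    · interval_cases m <;> omega
    · exact h
  have hfm1 : f (m - 1) = k := by
    have hne : f (m - 1) ≠ k + 1 := by
      intro h
      have : m ≤ m - 1 := Nat.sInf_le ⟨by omega, h⟩
      omega
    have := hstep (m - 1) (by omega)
    rw [show m - 1 + 1 = m by omega, hmval] at this
    omega
  set L := m - 1 with hLdef
  have hL : 1 ≤ L := by omega
  refine ⟨k, ?_⟩
  intro σ hconf
  have hwin : ∀ w, w <:+: σ → w.length ≤ L → w.toFinset.card ≤ k := by
    intro w hw hwl
    rcases Nat.eq_zero_or_pos w.length with h0 | h0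
    · rw [List.length_eq_zero_iff] at h0
      simp [h0]
    · calc w.toFinset.card ≤ f w.length := hconf w hw
        _ ≤ f L := f_mono f hstep _ _ h0 hwl
        _ = k := hfm1
  have hnat : fifoFaults k [] σ ≤ k * ((σ.length + L - 1) / L) :=
    chunk_bound k L hL σ.length σ rfl hwin []
  set T := σ.length with hT
  set q := (T + L - 1) / L with hq
  have hLpos : (0:ℝ) < (L:ℝ) := by exact_mod_cast hL
  have hq1 : (q:ℝ) * L ≤ (T:ℝ) + L := by
    have h1 : q * L ≤ T + L - 1 := Nat.div_mul_le_self _ _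
    have h2 : q * L ≤ T + L := by omega
    exact_mod_cast h2
  have hq2 : (q:ℝ) ≤ ((T:ℝ) + L) / L := (le_div_iff₀ hLpos).mpr hq1
  have hcast : ((L:ℕ):ℝ) = (m:ℝ) - 1 := by
    rw [hLdef]
    push_cast [Nat.cast_sub (show 1 ≤ m by omega)]
    ring
  rw [← hcast]
  have hstep1 : (fifoFaults k [] σ : ℝ) ≤ (k:ℝ) * q := by
    exact_mod_cast hnat
  have hstep2 : (k:ℝ) * q ≤ (k:ℝ) * (((T:ℝ) + L) / L) :=
    mul_le_mul_of_nonneg_left hq2 (by positivity)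
  have hstep3 : (k:ℝ) * (((T:ℝ) + L) / L) = (k:ℝ) / L * T + k := by
    field_simp
  calc (fifoFaults k [] σ : ℝ) ≤ (k:ℝ) * q := hstep1
    _ ≤ (k:ℝ) * (((T:ℝ) + L) / L) := hstep2
    _ = (k:ℝ) / L * T + k := hstep3
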